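/- arXiv:1303.4251 — 11 statements merged into one kernel-verified Lean document; each statement's English description precedes it below -/
import Mathlib

section
/- If the sequence a_n is positive and limsup_{n→∞} a_n^{2^{-n}} < ∞, then the sequence u_n = sqrt(a_1 + sqrt(a_2 + ... + sqrt(a_n))) is bounded above. -/
/-- `nest a n i = sqrt (a i + sqrt (a (i+1) + ⋯ + sqrt (a n)))`;
the `n`-th approximant of the continued square root is `nest a n 1`. -/
noncomputable def nest (a : ℕ → ℝ) (n : ℕ) : ℕ → ℝ
  | i => if _ : i ≤ n then Real.sqrt (a i + nest a n (i + 1)) else 0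
termination_by i => n + 1 - i
decreasing_by omega

lemma nest_le_aux (a : ℕ → ℝ) (C : ℝ) (hC : 1 ≤ C)
    (hkey : ∀ m, 1 ≤ m → a m ≤ C ^ ((2:ℝ)^m)) :
    ∀ k n i, 1 ≤ i → n + 1 - i ≤ k → nest a n i ≤ 2 * C ^ ((2:ℝ)^i) := by
  intro k
  induction k with
  | zero =>
    intro n i hi hk
    rw [nest, dif_neg (by omega)]
    have := Real.rpow_nonneg (by linarith : (0:ℝ) ≤ C) ((2:ℝ)^i)
    linarith
  | succ k ih =>
    intro n i hi hk
    rw [nest]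
    by_cases hin : i ≤ n
    · rw [dif_pos hin]
      have hDnn : (0:ℝ) ≤ C := by linarith
      set D := C ^ ((2:ℝ)^i) with hD
      have hD1 : 1 ≤ D := Real.one_le_rpow hC (by positivity)
      have h1 : a i ≤ D := hkey i hi
      have h2 : nest a n (i+1) ≤ 2 * C ^ ((2:ℝ)^(i+1)) := ih n (i+1) (by omega) (by omega)
      have hsq : C ^ ((2:ℝ)^(i+1)) = D^2 := by
        rw [hD, ← Real.rpow_natCast (C ^ ((2:ℝ)^i)) 2, ← Real.rpow_mul hDnn]
        norm_num [pow_succ, mul_comm]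
      rw [hsq] at h2
      have hsum : a i + nest a n (i+1) ≤ (2*D)^2 := by nlinarith
      calc Real.sqrt (a i + nest a n (i+1)) ≤ Real.sqrt ((2*D)^2) :=
            Real.sqrt_le_sqrt hsum
        _ = 2*D := Real.sqrt_sq (by linarith)
        _ = 2 * C ^ ((2:ℝ)^i) := by rw [hD]
    · rw [dif_neg hin]
      have := Real.rpow_nonneg (by linarith : (0:ℝ) ≤ C) ((2:ℝ)^i)
      linarith

theorem herschfeld_bounded (a : ℕ → ℝ) (ha : ∀ n, 1 ≤ n → 0 < a n)
    (h : Filter.IsBoundedUnder (· ≤ ·) Filter.atTop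
      (fun n => (a n) ^ (((2 : ℝ) ^ n)⁻¹))) :
    ∃ M : ℝ, ∀ n, nest a n 1 ≤ M := by
  obtain ⟨b, hb⟩ := h
  rw [Filter.eventually_map, Filter.eventually_atTop] at hb
  obtain ⟨N, hN⟩ := hb
  set C : ℝ := 1 + |b| + ∑ n ∈ Finset.range N, |a n ^ (((2:ℝ)^n)⁻¹)| with hCdef
  have hsumnn : (0:ℝ) ≤ ∑ n ∈ Finset.range N, |a n ^ (((2:ℝ)^n)⁻¹)| :=
    Finset.sum_nonneg fun _ _ => abs_nonneg _
  have hC1 : 1 ≤ C := by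
    have := abs_nonneg b; rw [hCdef]; linarith
  have hbound : ∀ m, 1 ≤ m → a m ^ (((2:ℝ)^m)⁻¹) ≤ C := by
    intro m hm
    by_cases hmN : N ≤ m
    · have := hN m hmN
      have := le_abs_self b
      rw [hCdef]; linarith
    · have hmem : m ∈ Finset.range N := Finset.mem_range.mpr (by omega)
      have hle : |a m ^ (((2:ℝ)^m)⁻¹)| ≤
          ∑ n ∈ Finset.range N, |a n ^ (((2:ℝ)^n)⁻¹)| :=
        Finset.single_le_sum (f := fun n => |a n ^ (((2:ℝ)^n)⁻¹)|) (fun _ _ => abs_nonneg _) hmem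
      have := le_abs_self (a m ^ (((2:ℝ)^m)⁻¹))
      have := abs_nonneg b
      rw [hCdef]; linarith
  have hkey : ∀ m, 1 ≤ m → a m ≤ C ^ ((2:ℝ)^m) := by
    intro m hm
    have h0 : 0 < a m := ha m hm
    have heq : a m = (a m ^ (((2:ℝ)^m)⁻¹)) ^ ((2:ℝ)^m) := by
      rw [← Real.rpow_mul h0.le, inv_mul_cancel₀ (by positivity), Real.rpow_one]
    rw [heq]
    exact Real.rpow_le_rpow (Real.rpow_nonneg h0.le _) (hbound m hm) (by positivity)
  refine ⟨2 * C ^ ((2:ℝ)^1), fun n => ?_⟩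
  exact nest_le_aux a C hC1 hkey n n 1 le_rfl (by omega)
end

section
/- Let a_n be a sequence of nonnegative reals and u_n = sqrt(a_1 + sqrt(a_2 + ... + sqrt(a_n))). Then u_n converges if and only if limsup_{n→∞} a_n^{2^{-n}} < ∞. -/
lemma nest_def (a : ℕ → ℝ) (n i : ℕ) :
    nest a n i = if i ≤ n then Real.sqrt (a i + nest a n (i + 1)) else 0 := by
  rw [nest]; split <;> rfl

lemma nest_nonneg (a : ℕ → ℝ) (n i : ℕ) : 0 ≤ nest a n i := by
  rw [nest_def]; split
  · exact Real.sqrt_nonneg _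
  · exact le_refl 0

lemma nest_mono_aux (a : ℕ → ℝ) (n : ℕ) :
    ∀ k i, n + 2 - i ≤ k → nest a n i ≤ nest a (n + 1) i := by
  intro k
  induction k with
  | zero =>
    intro i h
    rw [nest_def a n i, nest_def a (n + 1) i, if_neg (by omega), if_neg (by omega)]
  | succ k ih =>
    intro i h
    rcases le_or_gt i n with h1 | h1
    · rw [nest_def a n i, nest_def a (n + 1) i, if_pos h1, if_pos (by omega)]
      exact Real.sqrt_le_sqrt (by linarith [ih (i + 1) (by omega)])
    rcases le_or_gt i (n + 1) with h2 | h2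
    · rw [nest_def a n i, if_neg (by omega)]
      exact nest_nonneg _ _ _
    · rw [nest_def a n i, nest_def a (n + 1) i, if_neg (by omega), if_neg (by omega)]

lemma nest_upper (a : ℕ → ℝ) (M : ℝ) (hM : 1 ≤ M)
    (haM : ∀ i, 1 ≤ i → a i ≤ M ^ (2 ^ i)) (n : ℕ) :
    ∀ k i, n - i ≤ k → nest a n (i + 1) ≤ 2 * M ^ (2 ^ i) := by
  have hM0 : (0:ℝ) ≤ M := le_trans zero_le_one hM
  intro k
  induction k with
  | zero =>
    intro i h
    rw [nest_def, if_neg (by omega)]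
    positivity
  | succ k ih =>
    intro i h
    rcases le_or_gt (i + 1) n with h1 | h1
    · rw [nest_def, if_pos h1]
      have hnest := ih (i + 1) (by omega)
      have ha1 := haM (i + 1) (by omega)
      have hsq : (2 * M ^ (2 ^ i)) ^ 2 = 4 * M ^ (2 ^ (i + 1)) := by
        rw [show (2:ℕ) ^ (i + 1) = 2 ^ i * 2 from pow_succ 2 i, pow_mul]; ring
      have harg : a (i + 1) + nest a n (i + 2) ≤ (2 * M ^ (2 ^ i)) ^ 2 := by
        rw [hsq]
        have : (0:ℝ) ≤ M ^ (2 ^ (i + 1)) := by positivity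
        linarith
      calc Real.sqrt (a (i + 1) + nest a n (i + 2))
          ≤ Real.sqrt ((2 * M ^ (2 ^ i)) ^ 2) := Real.sqrt_le_sqrt harg
        _ = 2 * M ^ (2 ^ i) := Real.sqrt_sq (by positivity)
    · rw [nest_def, if_neg (by omega)]
      positivity

lemma nest_lower (a : ℕ → ℝ) (ha : ∀ n, 1 ≤ n → 0 ≤ a n) (n : ℕ) :
    ∀ k i, 1 ≤ i → i ≤ n → n - i ≤ k → a n ≤ nest a n i ^ (2 ^ (n + 1 - i)) := by
  intro k
  induction k with
  | zero =>
    intro i hi1 hin h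
    have hin' : i = n := by omega
    subst hin'
    rw [show i + 1 - i = 1 by omega, pow_one, nest_def, if_pos le_rfl,
      nest_def a i (i + 1), if_neg (by omega), add_zero,
      Real.sq_sqrt (ha i hi1)]
  | succ k ih =>
    intro i hi1 hin h
    rcases eq_or_lt_of_le hin with h1 | h1
    · subst h1
      rw [show i + 1 - i = 1 by omega, pow_one, nest_def, if_pos le_rfl,
        nest_def a i (i + 1), if_neg (by omega), add_zero,
        Real.sq_sqrt (ha i hi1)]
    · have hstep : a n ≤ nest a n (i + 1) ^ (2 ^ (n - i)) := by
        have := ih (i + 1) (by omega) (by omega) (by omega)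
        rwa [show n + 1 - (i + 1) = n - i by omega] at this
      have hpos : 0 ≤ a i + nest a n (i + 1) :=
        add_nonneg (ha i hi1) (nest_nonneg _ _ _)
      have hexp : (2:ℕ) ^ (n + 1 - i) = 2 * 2 ^ (n - i) := by
        rw [show n + 1 - i = (n - i) + 1 by omega, pow_succ]; ring
      rw [hexp, pow_mul, nest_def, if_pos (le_of_lt h1), Real.sq_sqrt hpos]
      calc a n ≤ nest a n (i + 1) ^ (2 ^ (n - i)) := hstep
        _ ≤ (a i + nest a n (i + 1)) ^ (2 ^ (n - i)) :=
          pow_le_pow_left₀ (nest_nonneg _ _ _)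
            (le_add_of_nonneg_left (ha i hi1)) _

theorem herschfeld_criterion (a : ℕ → ℝ) (ha : ∀ n, 1 ≤ n → 0 ≤ a n) :
    (∃ L : ℝ, Filter.Tendsto (fun n => nest a n 1) Filter.atTop (nhds L)) ↔
      Filter.IsBoundedUnder (· ≤ ·) Filter.atTop
        (fun n => (a n) ^ (((2 : ℝ) ^ n)⁻¹)) := by
  constructor
  · rintro ⟨L, hL⟩
    obtain ⟨M, hM⟩ := hL.isBoundedUnder_le
    rw [Filter.eventually_map] at hM
    refine ⟨M, ?_⟩
    rw [Filter.eventually_map]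
    filter_upwards [hM, Filter.eventually_ge_atTop 1] with n hn h1
    have hlow : a n ≤ nest a n 1 ^ (2 ^ n) := by
      have := nest_lower a ha n n 1 le_rfl h1 (by omega)
      rwa [show n + 1 - 1 = n by omega] at this
    have hc : ((2:ℝ) ^ n) ≠ 0 := by positivity
    have hu0 : 0 ≤ nest a n 1 := nest_nonneg _ _ _
    have hrw : nest a n 1 ^ ((2:ℕ) ^ n) = nest a n 1 ^ ((2:ℝ) ^ n) := by
      rw [← Real.rpow_natCast (nest a n 1) (2 ^ n)]
      norm_num
    calc a n ^ ((2:ℝ) ^ n)⁻¹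
        ≤ (nest a n 1 ^ ((2:ℝ) ^ n)) ^ ((2:ℝ) ^ n)⁻¹ := by
          apply Real.rpow_le_rpow (ha n h1) (by rw [← hrw]; exact hlow)
          positivity
      _ = nest a n 1 := Real.rpow_rpow_inv hu0 hc
      _ ≤ M := hn
  · intro hb
    obtain ⟨M0, hM0⟩ := hb.bddAbove_range
    set M : ℝ := max M0 1 with hMdef
    have hM1 : (1:ℝ) ≤ M := le_max_right _ _
    have key : ∀ i, 1 ≤ i → a i ≤ M ^ (2 ^ i) := by
      intro i hi
      have hbi : a i ^ ((2:ℝ) ^ i)⁻¹ ≤ M :=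
        le_trans (hM0 ⟨i, rfl⟩) (le_max_left _ _)
      have hc : ((2:ℝ) ^ i) ≠ 0 := by positivity
      have := Real.rpow_le_rpow (Real.rpow_nonneg (ha i hi) _) hbi
        (le_of_lt (by positivity : (0:ℝ) < (2:ℝ) ^ i))
      rw [Real.rpow_inv_rpow (ha i hi) hc] at this
      calc a i ≤ M ^ ((2:ℝ) ^ i) := this
        _ = M ^ ((2:ℕ) ^ i) := by
          rw [← Real.rpow_natCast M (2 ^ i)]; norm_num
    have hub : ∀ n, nest a n 1 ≤ 2 * M := by
      intro n
      have := nest_upper a M hM1 key n n 0 (by omega)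
      simpa using this
    have hmono : Monotone (fun n => nest a n 1) :=
      monotone_nat_of_le_succ (fun n => nest_mono_aux a n (n + 2) 1 (by omega))
    have hbdd : BddAbove (Set.range fun n => nest a n 1) := by
      refine ⟨2 * M, ?_⟩
      rintro _ ⟨n, rfl⟩
      exact hub n
    exact ⟨_, tendsto_atTop_ciSup hmono hbdd⟩
end

section
/- Let a_n > 0, r_n ≥ 1 be positive integers, and v_n = (a_1 + (a_2 + ... + a_n^{1/r_n})^{1/r_2})^{1/r_1} the n-th approximant of the continued radical. Define denesting functions f_0(y) = y and f_k(y) = f_{k-1}(y)^{r_k} - a_k. Then for every n ≥ 1, v_{n+1} - v_n = a_{n+1}^{1/r_{n+1}} / ∏_{i=1}^n (∑_{j=0}^{r_i - 1} f_{i-1}(v_{n+1})^j · f_{i-1}(v_n)^{r_i - 1 - j}). -/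
/-!
Write `v = v_n` and `v' = v_{n+1}`. Denesting `k` levels turns `v_m` into the tail of the radical
starting at depth `k + 1`, so `f_n v' = a_{n+1}^{1/r_{n+1}}` and `f_n v = 0`. Since
`x ^ r - y ^ r = (x - y) ∑ x ^ j y ^ (r - 1 - j)`, the difference `f_n v' - f_n v` telescopes to
`v' - v` times the product of these geometric sums, which are positive because all tails are.
-/

/-- `rad a r n i = (a i + (a (i+1) + ⋯ + (a n) ^ (1/r n)) ^ (1/r (i+1))) ^ (1/r i)`;
the `n`-th approximant `v n` of the continued radical is `rad a r n 1`. -/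
noncomputable def rad (a : ℕ → ℝ) (r : ℕ → ℕ) (n : ℕ) : ℕ → ℝ
  | i => if _ : i ≤ n then (a i + rad a r n (i + 1)) ^ ((r i : ℝ)⁻¹) else 0
termination_by i => n + 1 - i
decreasing_by omega

/-- The denesting functions: `den a r 0 y = y`, `den a r k y = (den a r (k-1) y) ^ (r k) - a k`. -/
noncomputable def den (a : ℕ → ℝ) (r : ℕ → ℕ) : ℕ → ℝ → ℝ
  | 0, y => y
  | k + 1, y => (den a r k y) ^ (r (k + 1)) - a (k + 1)

open Finset

lemma geom_sum₂_pos_of_pos_of_nonneg {R : Type*} [CommSemiring R] [PartialOrder R]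
    [IsStrictOrderedRing R] {x y : R} (hx : 0 < x) (hy : 0 ≤ y) {n : ℕ} (hn : n ≠ 0) :
    0 < ∑ i ∈ range n, x ^ i * y ^ (n - 1 - i) := by
  refine sum_pos' (fun i _ => by positivity) ⟨n - 1, mem_range.2 (by omega), ?_⟩
  rw [Nat.sub_self, pow_zero, mul_one]
  positivity

section Denesting

variable (a : ℕ → ℝ) (r : ℕ → ℕ)

lemma den_succ_sub_den_succ (k : ℕ) (x y : ℝ) :
    den a r (k + 1) x - den a r (k + 1) y =
      (den a r k x - den a r k y) * ∑ j ∈ range (r (k + 1)),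
        den a r k x ^ j * den a r k y ^ (r (k + 1) - 1 - j) := by
  rw [den, den, mul_comm, geom_sum₂_mul]
  ring

lemma den_sub_den (m : ℕ) (x y : ℝ) :
    den a r m x - den a r m y =
      (x - y) * ∏ i ∈ Icc 1 m, ∑ j ∈ range (r i),
        den a r (i - 1) x ^ j * den a r (i - 1) y ^ (r i - 1 - j) := by
  induction m with
  | zero => simp [den]
  | succ m ih =>
    rw [den_succ_sub_den_succ, ih, prod_Icc_succ_top (by omega), mul_assoc]
    rfl

end Denesting

section Radical

variable {a : ℕ → ℝ} (r : ℕ → ℕ) (n : ℕ)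

lemma rad_of_le {i : ℕ} (hi : i ≤ n) : rad a r n i = (a i + rad a r n (i + 1)) ^ (r i : ℝ)⁻¹ := by
  rw [rad, dif_pos hi]

lemma rad_of_lt {i : ℕ} (hi : n < i) : rad a r n i = 0 := by
  rw [rad, dif_neg (by omega)]

lemma rad_self : rad a r n n = a n ^ (r n : ℝ)⁻¹ := by
  rw [rad_of_le r n le_rfl, rad_of_lt r n (Nat.lt_succ_self n), add_zero]

lemma rad_nonneg (ha : ∀ i, 1 ≤ i → 0 ≤ a i) : ∀ i, 1 ≤ i → 0 ≤ rad a r n i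
  | i, hi => by
    rcases le_or_gt i n with hin | hin
    · rw [rad_of_le r n hin]
      exact Real.rpow_nonneg (add_nonneg (ha i hi) (rad_nonneg ha (i + 1) (by omega))) _
    · exact (rad_of_lt r n hin).ge
termination_by i => n + 1 - i

lemma rad_pow (ha : ∀ i, 1 ≤ i → 0 ≤ a i) {i : ℕ} (hi : 1 ≤ i) (hin : i ≤ n) (hri : r i ≠ 0) :
    rad a r n i ^ r i = a i + rad a r n (i + 1) := by
  rw [rad_of_le r n hin, ← Real.rpow_natCast, ← Real.rpow_mul
    (add_nonneg (ha i hi) (rad_nonneg r n ha (i + 1) (by omega))),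
    inv_mul_cancel₀ (Nat.cast_ne_zero.2 hri), Real.rpow_one]

lemma den_rad (ha : ∀ i, 1 ≤ i → 0 ≤ a i) (hr : ∀ i, 1 ≤ r i) :
    ∀ k ≤ n, den a r k (rad a r n 1) = rad a r n (k + 1)
  | 0, _ => rfl
  | k + 1, hk => by
    rw [den, den_rad ha hr k (by omega),
      rad_pow r n ha (by omega) hk (Nat.one_le_iff_ne_zero.1 (hr (k + 1)))]
    ring

lemma den_pred_rad (ha : ∀ i, 1 ≤ i → 0 ≤ a i) (hr : ∀ i, 1 ≤ r i) {i : ℕ} (hi : 1 ≤ i)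
    (hin : i ≤ n + 1) : den a r (i - 1) (rad a r n 1) = rad a r n i := by
  rw [den_rad r n ha hr (i - 1) (by omega), Nat.sub_add_cancel hi]

end Radical

lemma rad_pos {a : ℕ → ℝ} (r : ℕ → ℕ) (ha : ∀ i, 1 ≤ i → 0 < a i) {n i : ℕ}
    (hi : 1 ≤ i) (hin : i ≤ n) : 0 < rad a r n i := by
  rw [rad_of_le r n hin]
  exact Real.rpow_pos_of_pos
    (add_pos_of_pos_of_nonneg (ha i hi) (rad_nonneg r n (fun j hj => (ha j hj).le) _ (by omega))) _

theorem key_identity (a : ℕ → ℝ) (r : ℕ → ℕ) (ha : ∀ n, 1 ≤ n → 0 < a n)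
    (hr : ∀ n, 1 ≤ r n) :
    ∀ n, 1 ≤ n →
      rad a r (n + 1) 1 - rad a r n 1 =
        (a (n + 1)) ^ ((r (n + 1) : ℝ)⁻¹) /
          ∏ i ∈ Finset.Icc 1 n, ∑ j ∈ Finset.range (r i),
            (den a r (i - 1) (rad a r (n + 1) 1)) ^ j *
              (den a r (i - 1) (rad a r n 1)) ^ (r i - 1 - j) := by
  intro n _
  have ha' : ∀ i, 1 ≤ i → 0 ≤ a i := fun i hi => (ha i hi).le
  have hprod_pos : 0 < ∏ i ∈ Icc 1 n, ∑ j ∈ range (r i),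
      den a r (i - 1) (rad a r (n + 1) 1) ^ j * den a r (i - 1) (rad a r n 1) ^ (r i - 1 - j) := by
    refine prod_pos fun i hi => ?_
    rw [mem_Icc] at hi
    rw [den_pred_rad r (n + 1) ha' hr hi.1 (by omega), den_pred_rad r n ha' hr hi.1 (by omega)]
    exact geom_sum₂_pos_of_pos_of_nonneg (rad_pos r ha hi.1 (by omega))
      (rad_pos r ha hi.1 hi.2).le (Nat.one_le_iff_ne_zero.1 (hr i))
  have htop : den a r n (rad a r (n + 1) 1) = a (n + 1) ^ (r (n + 1) : ℝ)⁻¹ := by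
    rw [den_rad r (n + 1) ha' hr n (by omega), rad_self]
  have hbot : den a r n (rad a r n 1) = 0 := by
    rw [den_rad r n ha' hr n le_rfl, rad_of_lt r n (Nat.lt_succ_self n)]
  have hdiff := den_sub_den a r n (rad a r (n + 1) 1) (rad a r n 1)
  rw [htop, hbot, sub_zero] at hdiff
  rw [eq_div_iff hprod_pos.ne', hdiff]
end

section
/- Let a_n > 0, r_n positive integers, v_n the continued radical approximants, and f_k the denesting functions. If the series S = ∑_{n=1}^∞ a_{n+1}^{1/r_{n+1}} / ∏_{i=1}^n (r_i · f_{i-1}(v_n)^{r_i - 1}) converges, then the sequence v_n converges. -/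
open Finset Filter Topology

theorem exists_tendsto_of_summable_sub {G : Type*} [AddCommGroup G] [TopologicalSpace G]
    [IsTopologicalAddGroup G] {v : ℕ → G} (h : Summable fun n => v (n + 1) - v n) :
    ∃ L, Tendsto v atTop (𝓝 L) := by
  obtain ⟨M, hM⟩ := h
  refine ⟨v 0 + M, ?_⟩
  simpa only [sum_range_sub, add_sub_cancel] using hM.tendsto_sum_nat.const_add (v 0)

namespace rad

variable {a : ℕ → ℝ} {r : ℕ → ℕ} {n : ℕ}

theorem of_le {i : ℕ} (h : i ≤ n) : rad a r n i = (a i + rad a r n (i + 1)) ^ ((r i : ℝ)⁻¹) := by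
  rw [rad, dif_pos h]

theorem of_lt {i : ℕ} (h : n < i) : rad a r n i = 0 := by
  rw [rad, dif_neg (by omega)]

theorem self : rad a r n n = a n ^ ((r n : ℝ)⁻¹) := by
  rw [of_le le_rfl, of_lt (Nat.lt_succ_self n), add_zero]

theorem nonneg (ha : ∀ j, 1 ≤ j → 0 ≤ a j) {i : ℕ} (hi : 1 ≤ i) : 0 ≤ rad a r n i := by
  rcases le_or_gt i n with hin | hni
  · rw [of_le hin]
    have := nonneg (i := i + 1) ha (by omega)
    exact Real.rpow_nonneg (add_nonneg (ha i hi) this) _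
  · rw [of_lt hni]
termination_by n + 1 - i

theorem pos (ha : ∀ j, 1 ≤ j → 0 < a j) {i : ℕ} (hi : 1 ≤ i) (hin : i ≤ n) : 0 < rad a r n i := by
  rw [of_le hin]
  exact Real.rpow_pos_of_pos
    (add_pos_of_pos_of_nonneg (ha i hi) (nonneg (fun j hj => (ha j hj).le) (by omega))) _

theorem pow_eq_add (ha : ∀ j, 1 ≤ j → 0 ≤ a j) {i : ℕ} (hr : 0 < r i) (hi : 1 ≤ i) (hin : i ≤ n) :
    rad a r n i ^ r i = a i + rad a r n (i + 1) := by
  rw [of_le hin, Real.rpow_inv_natCast_pow (add_nonneg (ha i hi) (nonneg ha (by omega))) hr.ne']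

theorem le_succ (ha : ∀ j, 1 ≤ j → 0 ≤ a j) {i : ℕ} (hi : 1 ≤ i) :
    rad a r n i ≤ rad a r (n + 1) i := by
  rcases le_or_gt i n with hin | hni
  · rw [of_le hin, of_le (Nat.le_succ_of_le hin)]
    have := le_succ (i := i + 1) ha (by omega)
    exact Real.rpow_le_rpow (add_nonneg (ha i hi) (nonneg ha (by omega))) (by linarith)
      (by positivity)
  · rw [of_lt hni]
    exact nonneg ha hi
termination_by n + 1 - i

end rad

section Denesting

variable {a : ℕ → ℝ} {r : ℕ → ℕ} {n : ℕ}

theorem den_rad_one (ha : ∀ j, 1 ≤ j → 0 ≤ a j) (hr : ∀ j, 0 < r j) {k : ℕ} (hk : k ≤ n) :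
    den a r k (rad a r n 1) = rad a r n (k + 1) := by
  induction k with
  | zero => rfl
  | succ k ih =>
    rw [den, ih (by omega), rad.pow_eq_add ha (hr _) (by omega) hk, add_sub_cancel_left]

theorem prod_mul_rad_succ_sub_le (ha : ∀ j, 1 ≤ j → 0 ≤ a j) (hr : ∀ j, 0 < r j) {k : ℕ}
    (hk : k ≤ n) :
    (∏ i ∈ Icc 1 k, (r i : ℝ) * rad a r n i ^ (r i - 1)) * (rad a r (n + 1) 1 - rad a r n 1) ≤
      rad a r (n + 1) (k + 1) - rad a r n (k + 1) := by
  induction k with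
  | zero => simp
  | succ k ih =>
    set x := rad a r n (k + 1)
    set y := rad a r (n + 1) (k + 1)
    set m := r (k + 1)
    have hx : 0 ≤ x := rad.nonneg ha (by omega)
    have hy : 0 ≤ y := rad.nonneg ha (by omega)
    have bernoulli : x ^ m + m * x ^ (m - 1) * (y - x) ≤ y ^ m := by
      simpa using pow_add_mul_le_add_pow hx (by linarith : 0 ≤ 2 * x + (y - x)) m
    have hxm : x ^ m = a (k + 1) + rad a r n (k + 2) := rad.pow_eq_add ha (hr _) (by omega) hk
    have hym : y ^ m = a (k + 1) + rad a r (n + 1) (k + 2) :=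
      rad.pow_eq_add ha (hr _) (by omega) (by omega)
    rw [prod_Icc_succ_top (by omega)]
    calc _ = m * x ^ (m - 1) * ((∏ i ∈ Icc 1 k, (r i : ℝ) * rad a r n i ^ (r i - 1)) *
          (rad a r (n + 1) 1 - rad a r n 1)) := by ring
      _ ≤ m * x ^ (m - 1) * (y - x) := by gcongr; exact ih (by omega)
      _ ≤ _ := by linarith

theorem rad_succ_sub_le (ha : ∀ j, 1 ≤ j → 0 < a j) (hr : ∀ j, 0 < r j) :
    rad a r (n + 1) 1 - rad a r n 1 ≤
      a (n + 1) ^ ((r (n + 1) : ℝ)⁻¹) / ∏ i ∈ Icc 1 n, (r i : ℝ) * rad a r n i ^ (r i - 1) := by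
  have hprod : 0 < ∏ i ∈ Icc 1 n, (r i : ℝ) * rad a r n i ^ (r i - 1) := by
    refine prod_pos fun i hi => ?_
    rw [mem_Icc] at hi
    exact mul_pos (by exact_mod_cast hr i) (pow_pos (rad.pos ha hi.1 hi.2) _)
  rw [le_div_iff₀ hprod, mul_comm]
  simpa only [rad.self, rad.of_lt (Nat.lt_succ_self n), sub_zero] using
    prod_mul_rad_succ_sub_le (n := n) (fun j hj => (ha j hj).le) hr le_rfl

end Denesting

theorem sufficient_condition_convergence (a : ℕ → ℝ) (r : ℕ → ℕ)
    (ha : ∀ n, 1 ≤ n → 0 < a n) (hr : ∀ n, 1 ≤ r n)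
    (hS : Summable (fun n =>
      (a (n + 1)) ^ ((r (n + 1) : ℝ)⁻¹) /
        ∏ i ∈ Finset.Icc 1 n,
          (r i : ℝ) * (den a r (i - 1) (rad a r n 1)) ^ (r i - 1))) :
    ∃ L : ℝ, Filter.Tendsto (fun n => rad a r n 1) Filter.atTop (nhds L) := by
  have ha' : ∀ n, 1 ≤ n → 0 ≤ a n := fun n hn => (ha n hn).le
  have hden : ∀ n, ∀ i ∈ Icc 1 n, (r i : ℝ) * den a r (i - 1) (rad a r n 1) ^ (r i - 1) =
      r i * rad a r n i ^ (r i - 1) := by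
    intro n i hi
    rw [mem_Icc] at hi
    rw [den_rad_one ha' hr (by omega), Nat.sub_add_cancel hi.1]
  refine exists_tendsto_of_summable_sub (hS.of_nonneg_of_le
    (fun n => sub_nonneg.2 (rad.le_succ ha' le_rfl)) fun n => ?_)
  rw [prod_congr rfl (hden n)]
  exact rad_succ_sub_le ha hr
end

section
/- Let a_i, b_i > 0 and r_i positive integers, and set c_i = b_1^{r_1·r_2···r_i} · b_2^{r_2···r_i} ··· b_i^{r_i} · a_i. Then for every n, b_1·(a_1 + b_2·(a_2 + ... + b_n·a_n^{1/r_n})^{1/r_2})^{1/r_1} = (c_1 + (c_2 + ... + c_n^{1/r_n})^{1/r_2})^{1/r_1}. -/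
/-- `wrad a b r n i = b i * (a i + b (i+1) * (⋯ + b n * (a n) ^ (1/r n)) ^ (1/r (i+1))) ^ (1/r i)`;
the `n`-th approximant `w n` of the weighted continued radical is `wrad a b r n 1`. -/
noncomputable def wrad (a b : ℕ → ℝ) (r : ℕ → ℕ) (n : ℕ) : ℕ → ℝ
  | i => if _ : i ≤ n then b i * (a i + wrad a b r n (i + 1)) ^ ((r i : ℝ)⁻¹) else 0
termination_by i => n + 1 - i
decreasing_by omega


/-!
The factor `S i = b_1 ^ (r_1 ⋯ r_i) ⋯ b_i ^ r_i` with `c_i = S i · a_i` satisfies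
`S (i+1) = (S i · b_{i+1}) ^ r_{i+1}`, so `S (i+1)` multiplying the radicand of level `i+1`
leaves its `r_{i+1}`-th root as `S i · b_{i+1}`: the weight `b_{i+1}` of the weighted radical
appears, and `S i` is passed on to the level above. By downward induction the unweighted radical
at level `i+1` is `S i` times the weighted one, and `S 0 = 1`.
-/

lemma Real.mul_rpow_of_pos_left {x : ℝ} (hx : 0 < x) (y z : ℝ) :
    (x * y) ^ z = x ^ z * y ^ z := by
  rcases le_or_gt 0 y with hy | hy
  · exact Real.mul_rpow hx.le hy
  · rw [Real.rpow_def_of_neg (mul_neg_of_pos_of_neg hx hy), Real.rpow_def_of_neg hy,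
      Real.rpow_def_of_pos hx, Real.log_mul hx.ne' hy.ne, add_mul, Real.exp_add]
    ring

/-- The factor `S i` with `c_i = S i · a_i`. -/
noncomputable def radicalScale (b : ℕ → ℝ) (r : ℕ → ℕ) (i : ℕ) : ℝ :=
  ∏ j ∈ Finset.Icc 1 i, b j ^ (∏ k ∈ Finset.Icc j i, r k)

section radicalScale

variable (b : ℕ → ℝ) (r : ℕ → ℕ)

@[simp]
lemma radicalScale_zero : radicalScale b r 0 = 1 := by
  simp [radicalScale]

lemma radicalScale_succ (i : ℕ) :
    radicalScale b r (i + 1) = (radicalScale b r i * b (i + 1)) ^ r (i + 1) := by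
  have hexp : ∀ j ∈ Finset.Icc 1 i, b j ^ (∏ k ∈ Finset.Icc j (i + 1), r k) =
      (b j ^ (∏ k ∈ Finset.Icc j i, r k)) ^ r (i + 1) := fun j hj ↦ by
    rw [Finset.prod_Icc_succ_top (by have := (Finset.mem_Icc.mp hj).2; omega), pow_mul]
  rw [radicalScale, radicalScale, Finset.prod_Icc_succ_top (by omega), Finset.prod_congr rfl hexp,
    Finset.prod_pow, Finset.Icc_self, Finset.prod_singleton, mul_pow]

variable {b}

lemma radicalScale_pos (hb : ∀ n, 1 ≤ n → 0 < b n) (i : ℕ) : 0 < radicalScale b r i :=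
  Finset.prod_pos fun j hj ↦ pow_pos (hb j (Finset.mem_Icc.mp hj).1) _

end radicalScale

theorem rad_radicalScale_mul_eq (a : ℕ → ℝ) {b : ℕ → ℝ} {r : ℕ → ℕ}
    (hb : ∀ n, 1 ≤ n → 0 < b n) (hr : ∀ n, 1 ≤ r n) (n i : ℕ) :
    rad (fun j ↦ radicalScale b r j * a j) r n (i + 1) =
      radicalScale b r i * wrad a b r n (i + 1) := by
  rw [rad, wrad]
  split_ifs with hin
  · have hroot :
        radicalScale b r (i + 1) ^ ((r (i + 1) : ℝ)⁻¹) = radicalScale b r i * b (i + 1) := by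
      rw [radicalScale_succ]
      exact Real.pow_rpow_inv_natCast
        (mul_pos (radicalScale_pos r hb i) (hb _ le_add_self)).le (by have := hr (i + 1); omega)
    rw [rad_radicalScale_mul_eq a hb hr n (i + 1), ← mul_add,
      Real.mul_rpow_of_pos_left (radicalScale_pos r hb _), hroot, mul_assoc]
  · simp
termination_by n - i

theorem weighted_to_unweighted_general (a b : ℕ → ℝ) (r : ℕ → ℕ)
    (hb : ∀ n, 1 ≤ n → 0 < b n)
    (hr : ∀ n, 1 ≤ r n) :
    ∀ n : ℕ,
      wrad a b r n 1 =
        rad (fun i => (∏ j ∈ Finset.Icc 1 i, b j ^ (∏ k ∈ Finset.Icc j i, r k)) * a i)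
          r n 1 := by
  intro n
  have h := rad_radicalScale_mul_eq a hb hr n 0
  rw [radicalScale_zero, one_mul] at h
  exact h.symm

theorem weighted_to_unweighted (a b : ℕ → ℝ) (r : ℕ → ℕ)
    (ha : ∀ n, 1 ≤ n → 0 < a n) (hb : ∀ n, 1 ≤ n → 0 < b n)
    (hr : ∀ n, 1 ≤ r n) :
    ∀ n : ℕ,
      wrad a b r n 1 =
        rad (fun i => (∏ j ∈ Finset.Icc 1 i, b j ^ (∏ k ∈ Finset.Icc j i, r k)) * a i)
          r n 1 :=
  weighted_to_unweighted_general a b r hb hr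
end

section
/- Let a_i, b_i > 0, r_i positive integers, and w_n = b_1·(a_1 + b_2·(a_2 + ... + b_n·a_n^{1/r_n})...)^{1/r_1}. Then for every n ≥ 1, w_{n+1} - w_n ≤ (b_{n+1} · a_{n+1}^{1/r_{n+1}} · ∏_{i=1}^n b_i) / ∏_{i=1}^n (r_i · a_i^{(r_i-1)/r_i}). -/
/-!
Passing from `w n` to `w (n+1)` only changes the innermost radical, by
`b (n+1) * a (n+1) ^ (1/r (n+1))`.
Each enclosing layer `u ↦ b i * (a i + u) ^ (1/r i)` is concave in `u ≥ 0`, so it multiplies an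
increase of `u` by at most its slope at `u = 0`, namely `b i / (r i * a i ^ ((r i - 1)/r i))`.
Chaining these slopes from level `n` down to level `1` gives the bound.
-/

open Finset Real

lemma Real.rpow_sub_rpow_le_mul_sub {x y p : ℝ} (hx : 0 ≤ x) (hy : 0 < y) (hp0 : 0 ≤ p)
    (hp1 : p ≤ 1) : x ^ p - y ^ p ≤ p * y ^ (p - 1) * (x - y) := by
  have bernoulli := rpow_one_add_le_one_add_mul_self (s := x / y - 1) (by
    have := div_nonneg hx hy.le; linarith) hp0 hp1
  rw [add_sub_cancel, div_rpow hx hy.le, div_le_iff₀ (rpow_pos_of_pos hy p)] at bernoulli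
  have slope : p * y ^ (p - 1) * (x - y) = p * (x / y - 1) * y ^ p := by
    rw [rpow_sub_one hy.ne']; field_simp
  linarith

lemma Real.rpow_add_sub_rpow_add_le {a u v p : ℝ} (ha : 0 < a) (hu : 0 ≤ u) (huv : u ≤ v)
    (hp0 : 0 ≤ p) (hp1 : p ≤ 1) :
    (a + v) ^ p - (a + u) ^ p ≤ p * a ^ (p - 1) * (v - u) :=
  calc (a + v) ^ p - (a + u) ^ p ≤ p * (a + u) ^ (p - 1) * ((a + v) - (a + u)) :=
        rpow_sub_rpow_le_mul_sub (x := a + v) (y := a + u) (by linarith) (by linarith) hp0 hp1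
    _ ≤ p * a ^ (p - 1) * (v - u) := by
        rw [add_sub_add_left_eq_sub]
        have hmono : (a + u) ^ (p - 1) ≤ a ^ (p - 1) :=
          rpow_le_rpow_of_nonpos ha (by linarith) (by linarith)
        exact mul_le_mul_of_nonneg_right (mul_le_mul_of_nonneg_left hmono hp0) (by linarith)

lemma natCast_inv_mul_rpow_inv_sub_one (k : ℕ) {x : ℝ} (hx : 0 < x) :
    (k : ℝ)⁻¹ * x ^ ((k : ℝ)⁻¹ - 1) = ((k : ℝ) * x ^ (((k : ℝ) - 1) / k))⁻¹ := by
  rcases eq_or_ne k 0 with rfl | hk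
  · simp
  rw [mul_inv, ← rpow_neg hx.le]
  congr 2
  field_simp
  ring

section wrad

variable {a b : ℕ → ℝ} {r : ℕ → ℕ}

noncomputable def radicalSlope (a b : ℕ → ℝ) (r : ℕ → ℕ) (i : ℕ) : ℝ :=
  b i * ((r i : ℝ)⁻¹ * a i ^ ((r i : ℝ)⁻¹ - 1))

lemma radicalSlope_eq {i : ℕ} (ha : 0 < a i) :
    radicalSlope a b r i = b i / ((r i : ℝ) * a i ^ (((r i : ℝ) - 1) / r i)) := by
  rw [radicalSlope, natCast_inv_mul_rpow_inv_sub_one _ ha]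
  exact (div_eq_mul_inv _ _).symm

lemma radicalSlope_nonneg {i : ℕ} (ha : 0 < a i) (hb : 0 ≤ b i) :
    0 ≤ radicalSlope a b r i := by
  unfold radicalSlope
  positivity

lemma wrad_of_le {n i : ℕ} (h : i ≤ n) :
    wrad a b r n i = b i * (a i + wrad a b r n (i + 1)) ^ ((r i : ℝ)⁻¹) := by
  rw [wrad, dif_pos h]

lemma wrad_of_lt {n i : ℕ} (h : n < i) : wrad a b r n i = 0 := by
  rw [wrad, dif_neg (by omega)]

lemma wrad_nonneg {n i : ℕ} (ha : ∀ j ≥ i, 0 ≤ a j) (hb : ∀ j ≥ i, 0 ≤ b j) :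
    0 ≤ wrad a b r n i := by
  rcases le_or_gt i n with hin | hni
  · have := wrad_nonneg (n := n) (i := i + 1) (fun j hj => ha j (by omega))
      (fun j hj => hb j (by omega))
    rw [wrad_of_le hin]
    have := ha i le_rfl
    have := hb i le_rfl
    positivity
  · rw [wrad_of_lt hni]
termination_by n + 1 - i

lemma wrad_le_wrad_succ {n i : ℕ} (ha : ∀ j ≥ i, 0 ≤ a j) (hb : ∀ j ≥ i, 0 ≤ b j) :
    wrad a b r n i ≤ wrad a b r (n + 1) i := by
  have ha' : ∀ j ≥ i + 1, 0 ≤ a j := fun j hj => ha j (by omega)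
  have hb' : ∀ j ≥ i + 1, 0 ≤ b j := fun j hj => hb j (by omega)
  rcases le_or_gt i n with hin | hni
  · rw [wrad_of_le hin, wrad_of_le (by omega : i ≤ n + 1)]
    have := wrad_nonneg (r := r) (n := n) ha' hb'
    gcongr
    · exact hb i le_rfl
    · linarith [ha i le_rfl]
    · exact wrad_le_wrad_succ ha' hb'
  · rw [wrad_of_lt hni]
    exact wrad_nonneg ha hb
termination_by n + 1 - i

lemma wrad_succ_sub_wrad_le {n i : ℕ} (ha : ∀ j ≥ i, 0 < a j) (hb : ∀ j ≥ i, 0 ≤ b j)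
    (hin : i ≤ n) :
    wrad a b r (n + 1) i - wrad a b r n i ≤
      radicalSlope a b r i * (wrad a b r (n + 1) (i + 1) - wrad a b r n (i + 1)) := by
  have ha' : ∀ j ≥ i + 1, 0 ≤ a j := fun j hj => (ha j (by omega)).le
  have hb' : ∀ j ≥ i + 1, 0 ≤ b j := fun j hj => hb j (by omega)
  rw [wrad_of_le hin, wrad_of_le (by omega : i ≤ n + 1), ← mul_sub, radicalSlope,
    mul_assoc]
  exact mul_le_mul_of_nonneg_left
    (rpow_add_sub_rpow_add_le (ha i le_rfl) (wrad_nonneg ha' hb') (wrad_le_wrad_succ ha' hb')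
      (by positivity) (Nat.cast_inv_le_one _))
    (hb i le_rfl)

lemma wrad_succ_sub_wrad_le_prod {n i : ℕ} (ha : ∀ j ≥ i, 0 < a j)
    (hb : ∀ j ≥ i, 0 ≤ b j) (hin : i ≤ n + 1) :
    wrad a b r (n + 1) i - wrad a b r n i ≤
      (∏ j ∈ Icc i n, radicalSlope a b r j) *
        (b (n + 1) * a (n + 1) ^ ((r (n + 1) : ℝ)⁻¹)) := by
  rcases hin.eq_or_lt with rfl | hin
  · simp [wrad_of_le, wrad_of_lt]
  calc wrad a b r (n + 1) i - wrad a b r n i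
      ≤ radicalSlope a b r i * (wrad a b r (n + 1) (i + 1) - wrad a b r n (i + 1)) :=
        wrad_succ_sub_wrad_le ha hb (by omega)
    _ ≤ radicalSlope a b r i * ((∏ j ∈ Icc (i + 1) n, radicalSlope a b r j) *
          (b (n + 1) * a (n + 1) ^ ((r (n + 1) : ℝ)⁻¹))) :=
        mul_le_mul_of_nonneg_left (wrad_succ_sub_wrad_le_prod
          (fun j hj => ha j (by omega)) (fun j hj => hb j (by omega)) (by omega))
          (radicalSlope_nonneg (ha i le_rfl) (hb i le_rfl))
    _ = (∏ j ∈ Icc i n, radicalSlope a b r j) *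
          (b (n + 1) * a (n + 1) ^ ((r (n + 1) : ℝ)⁻¹)) := by
        rw [← insert_Icc_add_one_left_eq_Icc (by omega : i ≤ n), prod_insert (by simp),
          mul_assoc]
termination_by n + 1 - i

end wrad

theorem weighted_polya_szego_general (a b : ℕ → ℝ) (r : ℕ → ℕ)
    (ha : ∀ n, 1 ≤ n → 0 < a n) (hb : ∀ n, 1 ≤ n → 0 < b n) :
    ∀ n, 1 ≤ n →
      wrad a b r (n + 1) 1 - wrad a b r n 1 ≤
        (b (n + 1) * (a (n + 1)) ^ ((r (n + 1) : ℝ)⁻¹) * ∏ i ∈ Finset.Icc 1 n, b i) /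
          ∏ i ∈ Finset.Icc 1 n,
            (r i : ℝ) * (a i) ^ (((r i : ℝ) - 1) / (r i : ℝ)) := by
  intro n _
  refine (wrad_succ_sub_wrad_le_prod ha (fun j hj => (hb j hj).le) (by omega)).trans_eq ?_
  rw [prod_congr rfl fun j hj => radicalSlope_eq (ha j (mem_Icc.1 hj).1), prod_div_distrib]
  ring

theorem weighted_polya_szego (a b : ℕ → ℝ) (r : ℕ → ℕ)
    (ha : ∀ n, 1 ≤ n → 0 < a n) (hb : ∀ n, 1 ≤ n → 0 < b n)
    (hr : ∀ n, 1 ≤ r n) :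
    ∀ n, 1 ≤ n →
      wrad a b r (n + 1) 1 - wrad a b r n 1 ≤
        (b (n + 1) * (a (n + 1)) ^ ((r (n + 1) : ℝ)⁻¹) * ∏ i ∈ Finset.Icc 1 n, b i) /
          ∏ i ∈ Finset.Icc 1 n,
            (r i : ℝ) * (a i) ^ (((r i : ℝ) - 1) / (r i : ℝ)) :=
  weighted_polya_szego_general a b r ha hb
end

section
/- Let a_i > 0, p_i real with 0 < p_i ≤ 1 for all i, and t_n = (a_1 + (a_2 + ... + a_n^{p_n})^{p_2})^{p_1} the n-th approximant of the continued power form. Then for every n ≥ 1, t_{n+1} - t_n ≤ a_{n+1}^{p_{n+1}} · ∏_{i=1}^n p_i · a_i^{p_i - 1}. -/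
/-! Write `fᵢ(x) = (aᵢ + x)^{pᵢ}`, so that `t_n` is `f₁ ∘ ⋯ ∘ fₙ` at `0` and `t_{n+1}` is the same
composite at `f_{n+1}(0) = a_{n+1}^{p_{n+1}}`. For `0 < pᵢ ≤ 1` each `fᵢ` is monotone and concave
on `[0, ∞)`, with slope at most `fᵢ'(0) = pᵢ aᵢ^{pᵢ - 1}` there, so it stretches a nonnegative
increment by at most that factor. Descending from index `n + 1` gives the bound. -/

/-- `pow_form a p n i = (a i + (a (i+1) + ⋯ + (a n) ^ (p n)) ^ (p (i+1))) ^ (p i)`;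
the `n`-th approximant `t n` of the continued power form is `pow_form a p n 1`. -/
noncomputable def powForm (a : ℕ → ℝ) (p : ℕ → ℝ) (n : ℕ) : ℕ → ℝ
  | i => if _ : i ≤ n then (a i + powForm a p n (i + 1)) ^ (p i) else 0
termination_by i => n + 1 - i
decreasing_by omega

open Finset

lemma powForm_of_le {a p : ℕ → ℝ} {n i : ℕ} (h : i ≤ n) :
    powForm a p n i = (a i + powForm a p n (i + 1)) ^ p i := by
  rw [powForm, dif_pos h]

lemma powForm_of_lt {a p : ℕ → ℝ} {n i : ℕ} (h : n < i) : powForm a p n i = 0 := by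
  rw [powForm, dif_neg h.not_ge]

lemma powForm_nonneg {a p : ℕ → ℝ} {n i : ℕ} (ha : ∀ m, 1 ≤ m → 0 ≤ a m) (hi : 1 ≤ i) :
    0 ≤ powForm a p n i := by
  induction i using powForm.induct n with
  | case1 i _ hin ih =>
    rw [powForm_of_le hin]
    have := ha i hi
    have := ih (by omega)
    positivity
  | case2 i _ hin => rw [powForm_of_lt (not_le.mp hin)]

lemma rpow_add_sub_rpow_le {y d q : ℝ} (hy : 0 < y) (hd : 0 ≤ d) (hq₀ : 0 ≤ q)
    (hq₁ : q ≤ 1) :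
    (y + d) ^ q - y ^ q ≤ q * y ^ (q - 1) * d := by
  have hyq : 0 ≤ y ^ q := by positivity
  have bernoulli : (1 + d / y) ^ q ≤ 1 + q * (d / y) :=
    rpow_one_add_le_one_add_mul_self (by linarith [div_nonneg hd hy.le]) hq₀ hq₁
  calc (y + d) ^ q - y ^ q = y ^ q * (1 + d / y) ^ q - y ^ q := by
        rw [← Real.mul_rpow hy.le (by positivity), mul_add, mul_one, mul_div_cancel₀ _ hy.ne']
    _ ≤ y ^ q * (1 + q * (d / y)) - y ^ q := by gcongr
    _ = q * (y ^ q / y) * d := by ring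
    _ = q * y ^ (q - 1) * d := by rw [Real.rpow_sub_one hy.ne']

lemma powForm_succ_sub_mem_Icc {a p : ℕ → ℝ} {n i : ℕ} (ha : ∀ m, 1 ≤ m → 0 < a m)
    (hp : ∀ m, 1 ≤ m → 0 ≤ p m ∧ p m ≤ 1) (hi : 1 ≤ i) (hin : i ≤ n + 1) :
    powForm a p (n + 1) i - powForm a p n i ∈
      Set.Icc 0 (a (n + 1) ^ p (n + 1) * ∏ j ∈ Icc i n, p j * a j ^ (p j - 1)) := by
  refine Nat.decreasingInduction' (fun k hkn hk ih ↦ ?step) hin ?base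
  case base =>
    rw [powForm_of_le le_rfl, powForm_of_lt (Nat.lt_succ_self _), powForm_of_lt n.lt_succ_self,
      Icc_eq_empty (by omega), prod_empty, add_zero, sub_zero, mul_one]
    exact ⟨Real.rpow_nonneg (ha _ (by omega)).le _, le_rfl⟩
  case step =>
    obtain ⟨hd₀, hd⟩ := ih
    have hk₁ : 1 ≤ k := hi.trans hk
    obtain ⟨hq₀, hq₁⟩ := hp k hk₁
    have hak := ha k hk₁
    set T := powForm a p n (k + 1)
    set T' := powForm a p (n + 1) (k + 1)
    have hT : 0 ≤ T := powForm_nonneg (fun m hm ↦ (ha m hm).le) (by omega)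
    have hc : 0 ≤ p k * a k ^ (p k - 1) := by positivity
    rw [powForm_of_le (by omega : k ≤ n + 1), powForm_of_le (by omega : k ≤ n)]
    refine ⟨sub_nonneg.mpr (Real.rpow_le_rpow (by positivity) (by linarith) hq₀), ?_⟩
    calc (a k + T') ^ p k - (a k + T) ^ p k
        = (a k + T + (T' - T)) ^ p k - (a k + T) ^ p k := by rw [add_add_sub_cancel]
      _ ≤ p k * (a k + T) ^ (p k - 1) * (T' - T) :=
          rpow_add_sub_rpow_le (by positivity) hd₀ hq₀ hq₁
      _ ≤ p k * a k ^ (p k - 1) * (T' - T) := by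
          have := Real.rpow_le_rpow_of_nonpos hak (le_add_of_nonneg_right hT)
            (by linarith : p k - 1 ≤ 0)
          gcongr
      _ ≤ p k * a k ^ (p k - 1) *
            (a (n + 1) ^ p (n + 1) * ∏ j ∈ Icc (k + 1) n, p j * a j ^ (p j - 1)) :=
          mul_le_mul_of_nonneg_left hd hc
      _ = a (n + 1) ^ p (n + 1) * ∏ j ∈ Icc k n, p j * a j ^ (p j - 1) := by
          rw [← insert_Icc_add_one_left_eq_Icc (by omega : k ≤ n), prod_insert (by simp)]
          ring

theorem power_form_polya_szego (a : ℕ → ℝ) (p : ℕ → ℝ)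
    (ha : ∀ n, 1 ≤ n → 0 < a n) (hp : ∀ n, 1 ≤ n → 0 < p n ∧ p n ≤ 1) :
    ∀ n, 1 ≤ n →
      powForm a p (n + 1) 1 - powForm a p n 1 ≤
        (a (n + 1)) ^ (p (n + 1)) *
          ∏ i ∈ Finset.Icc 1 n, p i * (a i) ^ (p i - 1) := fun _ _ ↦
  (powForm_succ_sub_mem_Icc ha (fun m hm ↦ ⟨(hp m hm).1.le, (hp m hm).2⟩) le_rfl
    (by omega)).2
end

section
/- Let r ≥ 2 be an integer, a, b > 0, and w_n = b·(a + b·(a + ... + b·a^{1/r})...)^{1/r} the n-th approximant of the periodic radical b·(a + b·(a + ...)^{1/r})^{1/r}. Let c = b·a^{1/r} and s = b/(r·a^{(r-1)/r}). If s < 1, then the sequence w_n converges to some limit w, and for every n ≥ 1, 0 ≤ w - w_n ≤ c·s^n/(1 - s). -/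
open Filter

lemma wrad_shift (a b : ℝ) (r : ℕ) (n i : ℕ) :
    wrad (fun _ => a) (fun _ => b) (fun _ => r) (n + 1) (i + 1) =
      wrad (fun _ => a) (fun _ => b) (fun _ => r) n i := by
  conv_lhs => rw [wrad]
  conv_rhs => rw [wrad]
  by_cases h : i ≤ n
  · rw [dif_pos (by omega : i + 1 ≤ n + 1), dif_pos h, wrad_shift a b r n (i + 1)]
  · rw [dif_neg (by omega : ¬ i + 1 ≤ n + 1), dif_neg h]
termination_by n + 1 - i

lemma wrad_eq_iterate (a b : ℝ) (r : ℕ) (n : ℕ) :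
    wrad (fun _ => a) (fun _ => b) (fun _ => r) n 1 =
      (fun x => b * (a + x) ^ ((r : ℝ)⁻¹))^[n] 0 := by
  induction n with
  | zero => rw [wrad]; norm_num
  | succ n ih =>
      rw [wrad, dif_pos (by omega : 1 ≤ n + 1), Function.iterate_succ_apply',
        wrad_shift, ih]

open Filter

theorem periodic_radical_convergence (r : ℕ) (hr : 2 ≤ r) (a b : ℝ)
    (ha : 0 < a) (hb : 0 < b)
    (hs : b / (r * a ^ (((r : ℝ) - 1) / (r : ℝ))) < 1) :
    ∃ w : ℝ,
      Filter.Tendsto (fun n => wrad (fun _ => a) (fun _ => b) (fun _ => r) n 1)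
        Filter.atTop (nhds w) ∧
      ∀ n, 1 ≤ n →
        0 ≤ w - wrad (fun _ => a) (fun _ => b) (fun _ => r) n 1 ∧
        w - wrad (fun _ => a) (fun _ => b) (fun _ => r) n 1 ≤
          (b * a ^ ((r : ℝ)⁻¹)) * (b / (r * a ^ (((r : ℝ) - 1) / (r : ℝ)))) ^ n /
            (1 - b / (r * a ^ (((r : ℝ) - 1) / (r : ℝ)))) := by
  set p : ℝ := (r : ℝ)⁻¹ with hp
  set s : ℝ := b / (r * a ^ (((r : ℝ) - 1) / (r : ℝ))) with hsdef
  set F : ℝ → ℝ := fun x => b * (a + x) ^ p with hF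
  have hr0 : (0 : ℝ) < r := by positivity
  have hp0 : 0 < p := by positivity
  have hq : ((r : ℝ) - 1) / (r : ℝ) = 1 - p := by rw [hp]; field_simp
  have hs0 : 0 < s := by
    rw [hsdef]
    positivity
  -- derivative bound
  have hderiv : ∀ x ∈ Set.Ici (0:ℝ),
      HasDerivWithinAt F (b * (p * (a + x) ^ (p - 1) * 1)) (Set.Ici 0) x := by
    intro x hx
    have hax : (0:ℝ) < a + x := by have := hx; simp at this; linarith
    exact (((Real.hasDerivAt_rpow_const (p := p) (Or.inl hax.ne')).comp x
      ((hasDerivAt_id x).const_add a)).const_mul b).hasDerivWithinAt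
  have hbound : ∀ x ∈ Set.Ici (0:ℝ), ‖b * (p * (a + x) ^ (p - 1) * 1)‖₊ ≤ s.toNNReal := by
    intro x hx
    have hx0 : (0:ℝ) ≤ x := hx
    have hax : (0:ℝ) < a + x := by linarith
    rw [← NNReal.coe_le_coe, coe_nnnorm, Real.coe_toNNReal _ hs0.le, mul_one,
      Real.norm_eq_abs, abs_of_nonneg (by positivity)]
    have hple : p ≤ 1 := by
      rw [hp, inv_le_one_iff₀]
      right
      exact_mod_cast hr.trans' (by norm_num)
    have h1 : (a + x) ^ (p - 1) ≤ a ^ (p - 1) :=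
      Real.rpow_le_rpow_of_nonpos ha (by linarith) (by linarith)
    calc b * (p * (a + x) ^ (p - 1)) ≤ b * (p * a ^ (p - 1)) := by
          gcongr
      _ = s := by
          rw [hsdef, hq, (by ring : p - 1 = -(1 - p)), Real.rpow_neg ha.le, hp]
          field_simp
  have hlip : LipschitzOnWith s.toNNReal F (Set.Ici 0) :=
    (convex_Ici 0).lipschitzOnWith_of_nnnorm_hasDerivWithin_le hderiv hbound
  haveI : Nonempty (Set.Ici (0:ℝ)) := ⟨⟨0, Set.self_mem_Ici⟩⟩
  haveI : CompleteSpace (Set.Ici (0:ℝ)) := (isClosed_Ici).completeSpace_coe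
  set g : Set.Ici (0:ℝ) → Set.Ici (0:ℝ) := fun x =>
    ⟨F x.1, mul_nonneg hb.le (Real.rpow_nonneg (add_nonneg ha.le x.2) _)⟩ with hg_def
  have hK1 : s.toNNReal < 1 := by
    rw [← NNReal.coe_lt_one, Real.coe_toNNReal _ hs0.le]; exact hs
  have hg : ContractingWith s.toNNReal g := by
    refine ⟨hK1, LipschitzWith.of_dist_le_mul fun x y => ?_⟩
    rw [Subtype.dist_eq, Subtype.dist_eq]
    exact hlip.dist_le_mul x.1 x.2 y.1 y.2
  set w0 : Set.Ici (0:ℝ) := ⟨0, Set.self_mem_Ici⟩ with hw0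
  have key : ∀ n, ((g^[n] w0 : Set.Ici (0:ℝ)) : ℝ) = F^[n] 0 := by
    intro n
    induction n with
    | zero => rfl
    | succ n ih =>
        rw [Function.iterate_succ_apply', Function.iterate_succ_apply', ← ih]
  set w : ℝ := (ContractingWith.fixedPoint g hg).1 with hw
  have htend : Filter.Tendsto (fun n => F^[n] (0:ℝ)) Filter.atTop (nhds w) := by
    have h := (continuous_subtype_val.tendsto _).comp (hg.tendsto_iterate_fixedPoint w0)
    exact Filter.Tendsto.congr key h
  have hest : ∀ n, dist (F^[n] (0:ℝ)) w ≤ (b * a ^ p) * s ^ n / (1 - s) := by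
    intro n
    have h := hg.apriori_dist_iterate_fixedPoint_le w0 n
    rw [Subtype.dist_eq, Subtype.dist_eq, key] at h
    have hd : dist (w0 : ℝ) ((g w0 : Set.Ici (0:ℝ)) : ℝ) = b * a ^ p := by
      rw [Real.dist_eq]
      show |0 - b * (a + 0) ^ p| = b * a ^ p
      rw [zero_sub, abs_neg, add_zero, abs_of_nonneg (by positivity)]
    rw [hd, Real.coe_toNNReal _ hs0.le] at h
    rw [dist_comm] at h
    rwa [dist_comm]
  have hnn : ∀ n, 0 ≤ F^[n] (0:ℝ) := fun n => key n ▸ (g^[n] w0).2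
  have hmono : Monotone fun n => F^[n] (0:ℝ) := by
    apply monotone_nat_of_le_succ
    intro n
    induction n with
    | zero =>
        show (0:ℝ) ≤ b * (a + 0) ^ p
        positivity
    | succ n ih =>
        rw [Function.iterate_succ_apply', Function.iterate_succ_apply']
        exact mul_le_mul_of_nonneg_left
          (Real.rpow_le_rpow (add_nonneg ha.le (hnn n)) (by
            have := ih
            rw [Function.iterate_succ_apply'] at this ⊢
            linarith) hp0.le) hb.le
  have hle : ∀ n, F^[n] (0:ℝ) ≤ w := fun n => hmono.ge_of_tendsto htend n
  refine ⟨w, ?_, ?_⟩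
  · exact Filter.Tendsto.congr (fun n => (wrad_eq_iterate a b r n).symm) htend
  · intro n hn
    rw [wrad_eq_iterate]
    refine ⟨sub_nonneg.mpr (hle n), ?_⟩
    calc w - F^[n] (0:ℝ) = -(F^[n] (0:ℝ) - w) := by ring
      _ ≤ |F^[n] (0:ℝ) - w| := neg_le_abs _
      _ = dist (F^[n] (0:ℝ)) w := (Real.dist_eq _ _).symm
      _ ≤ (b * a ^ p) * s ^ n / (1 - s) := hest n
end

section
/- Let w_n = sqrt(1 + 2·sqrt(1 + 3·sqrt(1 + ... + n·sqrt(1)))) be the n-th approximant of the Ramanujan radical. Then for every i with 1 ≤ i ≤ n, the i-th tail i·sqrt(1 + (i+1)·sqrt(1 + ... + n·sqrt(1))) is at least i^{2 - 2^{-(n-i)}}. -/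
/-- Tails of the Ramanujan radical: `ramTail n i = i * sqrt (1 + ramTail n (i+1))` for
`i ≤ n` and `0` otherwise, so that `ramTail n 1 = sqrt (1 + 2 * sqrt (1 + ⋯ + n * sqrt 1))`
is the `n`-th approximant `w n`. -/
noncomputable def ramTail (n : ℕ) : ℕ → ℝ
  | i => if _ : i ≤ n then (i : ℝ) * Real.sqrt (1 + ramTail n (i + 1)) else 0
termination_by i => n + 1 - i
decreasing_by omega

lemma ramTail_aux (n : ℕ) : ∀ k i : ℕ, 1 ≤ i → i + k = n →
    (i : ℝ) ^ ((2 : ℝ) - ((2 : ℝ) ^ ((n - i : ℕ)))⁻¹) ≤ ramTail n i := by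
  intro k
  induction k with
  | zero =>
    intro i hi hik
    have hin : i = n := by omega
    subst hin
    rw [ramTail]
    rw [dif_pos le_rfl, ramTail, dif_neg (by omega)]
    simp only [Nat.sub_self, pow_zero, inv_one]
    norm_num [Real.rpow_one]
  | succ k ih =>
    intro i hi hik
    have hile : i ≤ n := by omega
    have hI : (1 : ℝ) ≤ (i : ℝ) := by exact_mod_cast hi
    have hIpos : (0 : ℝ) < (i : ℝ) := by linarith
    have hni : n - i = k + 1 := by omega
    have hni1 : n - (i + 1) = k := by omega
    have hIH := ih (i + 1) (by omega) (by omega)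
    rw [hni1] at hIH
    -- exponent facts
    set e : ℝ := (2 : ℝ) - ((2 : ℝ) ^ k)⁻¹ with he
    have hepos : (0 : ℝ) ≤ e := by
      have : ((2:ℝ) ^ k)⁻¹ ≤ 1 := by
        rw [inv_le_one_iff₀]; right; exact one_le_pow₀ (by norm_num)
      rw [he]; linarith
    have hexp : (2 : ℝ) - ((2 : ℝ) ^ (k + 1))⁻¹ = 1 + e / 2 := by
      rw [he, pow_succ]
      field_simp
      ring
    rw [hni, hexp, Real.rpow_add hIpos, Real.rpow_one]
    rw [ramTail, dif_pos hile]
    apply mul_le_mul_of_nonneg_left _ (le_of_lt hIpos)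
    -- (i:ℝ) ^ (e/2) ≤ sqrt (1 + ramTail n (i+1))
    have h1 : ((i : ℝ)) ^ (e / 2) = Real.sqrt ((i : ℝ) ^ e) := by
      rw [Real.sqrt_eq_rpow, ← Real.rpow_mul (le_of_lt hIpos) e]
      ring_nf
    rw [h1]
    apply Real.sqrt_le_sqrt
    calc (i : ℝ) ^ e ≤ ((i : ℝ) + 1) ^ e := by
          apply Real.rpow_le_rpow (le_of_lt hIpos) (by linarith) hepos
      _ ≤ ramTail n (i + 1) := by push_cast at hIH ⊢; exact hIH
      _ ≤ 1 + ramTail n (i + 1) := by linarith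

theorem ramanujan_tail_lower_bound :
    ∀ n : ℕ, 1 ≤ n → ∀ i : ℕ, 1 ≤ i → i ≤ n →
      (i : ℝ) ^ ((2 : ℝ) - ((2 : ℝ) ^ ((n - i : ℕ)))⁻¹) ≤ ramTail n i := by
  intro n _ i hi hin
  exact ramTail_aux n (n - i) i hi (by omega)
end

section
/- Let w_n = sqrt(1 + 2·sqrt(1 + 3·sqrt(1 + ... + n·sqrt(1)))). Then for every n ≥ 1, 0 ≤ w_{n+1} - w_n ≤ ((n+1)/2^n) · ∏_{i=1}^n i^{2^{-(n-i)}} ≤ n^2·(n+1)/2^n. -/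
open Finset Real

lemma Real.sqrt_sub_sqrt_le {a b : ℝ} (ha : 0 ≤ a) (hb : 0 < b) :
    √a - √b ≤ (a - b) / (2 * √b) := by
  have hsb : 0 < √b := sqrt_pos.2 hb
  rw [le_div_iff₀ (by positivity)]
  nlinarith [two_mul_le_add_sq √a √b, sq_sqrt ha, sq_sqrt hb.le]

lemma inv_two_pow_le_one (k : ℕ) : ((2 : ℝ) ^ k)⁻¹ ≤ 1 :=
  inv_le_one_of_one_le₀ (one_le_pow₀ one_le_two)

lemma inv_two_pow_sub_succ {n i : ℕ} (h : i < n) :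
    ((2 : ℝ) ^ (n - (i + 1)))⁻¹ = 2 * ((2 : ℝ) ^ (n - i))⁻¹ := by
  rw [show n - i = n - (i + 1) + 1 by omega, pow_succ, mul_inv]
  field_simp

lemma sum_inv_two_pow_sub_le_two (n : ℕ) : ∑ i ∈ Icc 1 n, ((2 : ℝ) ^ (n - i))⁻¹ ≤ 2 := by
  rw [← Ico_add_one_right_eq_Icc, sum_Ico_reflect (fun k ↦ ((2 : ℝ) ^ k)⁻¹) 1 le_rfl,
    Nat.sub_self, Nat.add_sub_cancel, Nat.Ico_zero_eq_range]
  simpa only [one_div, inv_pow] using sum_geometric_two_le n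

lemma prod_rpow_inv_two_pow_sub_le_sq {n : ℕ} (hn : 1 ≤ n) :
    ∏ i ∈ Icc 1 n, (i : ℝ) ^ ((2 : ℝ) ^ (n - i))⁻¹ ≤ (n : ℝ) ^ 2 := by
  have hn' : (1 : ℝ) ≤ n := Nat.one_le_cast.2 hn
  calc ∏ i ∈ Icc 1 n, (i : ℝ) ^ ((2 : ℝ) ^ (n - i))⁻¹
      ≤ ∏ i ∈ Icc 1 n, (n : ℝ) ^ ((2 : ℝ) ^ (n - i))⁻¹ :=
        prod_le_prod (fun i _ ↦ by positivity) fun i hi ↦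
          rpow_le_rpow (by positivity) (Nat.cast_le.2 (mem_Icc.1 hi).2) (by positivity)
    _ = (n : ℝ) ^ ∑ i ∈ Icc 1 n, ((2 : ℝ) ^ (n - i))⁻¹ := (rpow_sum_of_pos (by positivity) _ _).symm
    _ ≤ (n : ℝ) ^ (2 : ℝ) := rpow_le_rpow_of_exponent_le hn' (sum_inv_two_pow_sub_le_two n)
    _ = (n : ℝ) ^ 2 := rpow_two _

namespace ramTail

lemma of_le {n i : ℕ} (h : i ≤ n) : ramTail n i = i * √(1 + ramTail n (i + 1)) := by
  rw [ramTail, dif_pos h]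

lemma of_lt {n i : ℕ} (h : n < i) : ramTail n i = 0 := by
  rw [ramTail, dif_neg (by omega)]

lemma nonneg (n i : ℕ) : 0 ≤ ramTail n i := by
  rw [ramTail]; split <;> positivity

lemma le_succ (n i : ℕ) : ramTail n i ≤ ramTail (n + 1) i := by
  rcases le_or_gt i (n + 1) with hi | hi
  · induction hi using Nat.decreasingInduction with
    | self => rw [of_lt (Nat.lt_succ_self n)]; exact nonneg _ _
    | of_succ k hk ih =>
      rw [of_le (Nat.lt_succ_iff.1 hk), of_le hk.le]
      gcongr
  · rw [of_lt hi, of_lt (by omega)]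

lemma rpow_le_sqrt_one_add {n i : ℕ} (hi : 1 ≤ i) (hin : i ≤ n) :
    (i : ℝ) ^ (1 - ((2 : ℝ) ^ (n - i))⁻¹) ≤ √(1 + ramTail n (i + 1)) := by
  induction hin using Nat.decreasingInduction with
  | self => simp [of_lt (Nat.lt_succ_self n)]
  | of_succ k hk ih =>
    have hk0 : (0 : ℝ) < k := Nat.cast_pos.2 hi
    have ih := ih (by omega)
    push_cast at ih
    set ε := ((2 : ℝ) ^ (n - k))⁻¹
    have hε : ((2 : ℝ) ^ (n - (k + 1)))⁻¹ = 2 * ε := inv_two_pow_sub_succ hk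
    rw [hε] at ih
    have hexp : 0 ≤ 1 - 2 * ε := by rw [← hε]; linarith [inv_two_pow_le_one (n - (k + 1))]
    rw [le_sqrt (by positivity) (by linarith [nonneg n (k + 1)])]
    calc ((k : ℝ) ^ (1 - ε)) ^ 2 = k * (k : ℝ) ^ (1 - 2 * ε) := by
          rw [← rpow_mul_natCast hk0.le, ← rpow_one_add' hk0.le (by linarith)]
          ring_nf
      _ ≤ (k + 1) * ((k : ℝ) + 1) ^ (1 - 2 * ε) := by
          gcongr <;> linarith
      _ ≤ (k + 1) * √(1 + ramTail n (k + 1 + 1)) := by gcongr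
      _ ≤ 1 + ramTail n (k + 1) := by
          rw [of_le (show k + 1 ≤ n from hk)]
          push_cast
          linarith

lemma succ_sub_le_mul_succ_sub {n i : ℕ} (hi : 1 ≤ i) (hin : i ≤ n) :
    ramTail (n + 1) i - ramTail n i ≤
      (i : ℝ) ^ ((2 : ℝ) ^ (n - i))⁻¹ / 2 * (ramTail (n + 1) (i + 1) - ramTail n (i + 1)) := by
  set T := ramTail n (i + 1)
  set T' := ramTail (n + 1) (i + 1)
  have hT : 0 ≤ T := nonneg n (i + 1)
  have hi0 : (0 : ℝ) < i := Nat.cast_pos.2 hi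
  have hS : 0 < √(1 + T) := sqrt_pos.2 (by linarith)
  have hTT' : 0 ≤ T' - T := sub_nonneg.2 (le_succ n (i + 1))
  have hiS : (i : ℝ) / √(1 + T) ≤ (i : ℝ) ^ ((2 : ℝ) ^ (n - i))⁻¹ := by
    rw [div_le_iff₀ hS]
    calc (i : ℝ) = (i : ℝ) ^ ((2 : ℝ) ^ (n - i))⁻¹ * (i : ℝ) ^ (1 - ((2 : ℝ) ^ (n - i))⁻¹) := by
          rw [← rpow_add hi0, add_sub_cancel, rpow_one]
      _ ≤ _ := by gcongr; exact rpow_le_sqrt_one_add hi hin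
  calc ramTail (n + 1) i - ramTail n i = i * (√(1 + T') - √(1 + T)) := by
        rw [of_le hin, of_le (hin.trans (Nat.le_succ n))]
        ring
    _ ≤ i * ((1 + T' - (1 + T)) / (2 * √(1 + T))) := by
        gcongr
        exact sqrt_sub_sqrt_le (by linarith) (by linarith)
    _ = i / √(1 + T) / 2 * (T' - T) := by field_simp; ring
    _ ≤ _ := by gcongr

lemma succ_sub_le {n i : ℕ} (hi : 1 ≤ i) (hin : i ≤ n + 1) :
    ramTail (n + 1) i - ramTail n i ≤
      ((n : ℝ) + 1) / 2 ^ (n + 1 - i) * ∏ j ∈ Icc i n, (j : ℝ) ^ ((2 : ℝ) ^ (n - j))⁻¹ := by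
  induction hin using Nat.decreasingInduction with
  | self => simp [of_le le_rfl, of_lt (Nat.lt_succ_self n), of_lt (Nat.lt_succ_self (n + 1))]
  | of_succ k hk ih =>
    have hkn : k ≤ n := Nat.lt_succ_iff.1 hk
    calc ramTail (n + 1) k - ramTail n k
        ≤ (k : ℝ) ^ ((2 : ℝ) ^ (n - k))⁻¹ / 2 * (ramTail (n + 1) (k + 1) - ramTail n (k + 1)) :=
          succ_sub_le_mul_succ_sub hi hkn
      _ ≤ (k : ℝ) ^ ((2 : ℝ) ^ (n - k))⁻¹ / 2 * (((n : ℝ) + 1) / 2 ^ (n + 1 - (k + 1)) *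
            ∏ j ∈ Icc (k + 1) n, (j : ℝ) ^ ((2 : ℝ) ^ (n - j))⁻¹) := by
          gcongr
          exact ih (by omega)
      _ = ((n : ℝ) + 1) / 2 ^ (n + 1 - k) * ∏ j ∈ Icc k n, (j : ℝ) ^ ((2 : ℝ) ^ (n - j))⁻¹ := by
          rw [← insert_Icc_add_one_left_eq_Icc hkn, prod_insert (by simp),
            show n + 1 - k = n + 1 - (k + 1) + 1 by omega, pow_succ]
          ring

end ramTail

theorem ramanujan_difference_bound :
    ∀ n, 1 ≤ n →
      0 ≤ ramTail (n + 1) 1 - ramTail n 1 ∧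
      ramTail (n + 1) 1 - ramTail n 1 ≤
        (((n : ℝ) + 1) / 2 ^ n) * ∏ i ∈ Finset.Icc 1 n, (i : ℝ) ^ (((2 : ℝ) ^ (n - i))⁻¹) ∧
      (((n : ℝ) + 1) / 2 ^ n) * ∏ i ∈ Finset.Icc 1 n, (i : ℝ) ^ (((2 : ℝ) ^ (n - i))⁻¹) ≤
        (n : ℝ) ^ 2 * ((n : ℝ) + 1) / 2 ^ n := by
  intro n hn
  refine ⟨sub_nonneg.2 (ramTail.le_succ n 1), ?_, ?_⟩
  · simpa using ramTail.succ_sub_le le_rfl (Nat.le_add_left 1 n)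
  · calc ((n : ℝ) + 1) / 2 ^ n * ∏ i ∈ Icc 1 n, (i : ℝ) ^ ((2 : ℝ) ^ (n - i))⁻¹
        ≤ ((n : ℝ) + 1) / 2 ^ n * (n : ℝ) ^ 2 := by
          gcongr
          exact prod_rpow_inv_two_pow_sub_le_sq hn
      _ = (n : ℝ) ^ 2 * ((n : ℝ) + 1) / 2 ^ n := by ring
end

section
/- The approximants w_n = sqrt(1 + 2·sqrt(1 + 3·sqrt(1 + ... + n·sqrt(1)))) of the Ramanujan radical form a convergent sequence, and there exists C > 0 such that for all n ≥ 1, 0 ≤ 3 - w_n ≤ C·n^3/2^n. In particular the limit equals 3. -/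
theorem ramTail_nonneg (n i : ℕ) : 0 ≤ ramTail n i := by
  rw [ramTail]; split
  · positivity
  · exact le_refl _

theorem ramTail_le (n i : ℕ) : ramTail n i ≤ (i : ℝ) * ((i : ℝ) + 2) := by
  rw [ramTail]; split
  · have ih := ramTail_le n (i + 1)
    have h1 : Real.sqrt (1 + ramTail n (i + 1)) ≤ (i : ℝ) + 2 := by
      have : (1 : ℝ) + ramTail n (i + 1) ≤ ((i : ℝ) + 2) ^ 2 := by
        push_cast at ih ⊢; nlinarith
      calc Real.sqrt (1 + ramTail n (i + 1)) ≤ Real.sqrt (((i : ℝ) + 2) ^ 2) :=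
            Real.sqrt_le_sqrt this
        _ = (i : ℝ) + 2 := Real.sqrt_sq (by positivity)
    calc (i : ℝ) * Real.sqrt (1 + ramTail n (i + 1)) ≤ (i : ℝ) * ((i : ℝ) + 2) := by
          apply mul_le_mul_of_nonneg_left h1 (by positivity)
    _ = _ := rfl
  · positivity
termination_by n + 1 - i
decreasing_by omega

theorem ramTail_lower (n i : ℕ) (hi : i ≤ n) :
    (((n : ℝ) + 2)⁻¹ ^ (((2 : ℝ) ^ (n - i))⁻¹ : ℝ)) * ((i : ℝ) * ((i : ℝ) + 2))
      ≤ ramTail n i := by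
  have hc : (0 : ℝ) < ((n : ℝ) + 2)⁻¹ := by positivity
  have hc1 : ((n : ℝ) + 2)⁻¹ ≤ 1 := by
    rw [inv_le_one_iff₀]; right; linarith [Nat.cast_nonneg (α := ℝ) n]
  rw [ramTail, dif_pos hi]
  rcases eq_or_lt_of_le hi with heq | hlt
  · subst heq
    have h0 : ramTail i (i + 1) = 0 := by rw [ramTail, dif_neg (by omega)]
    rw [h0]
    norm_num
    have : ((i : ℝ) + 2)⁻¹ * ((i : ℝ) * ((i : ℝ) + 2)) = (i : ℝ) := by
      field_simp
    exact le_of_eq this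
  · have ih := ramTail_lower n (i + 1) (by omega)
    set c : ℝ := ((n : ℝ) + 2)⁻¹ with hcdef
    set e' : ℝ := (((2 : ℝ) ^ (n - (i + 1)))⁻¹ : ℝ) with he'
    have hce' : c ^ e' ≤ 1 := Real.rpow_le_one hc.le hc1 (by positivity)
    have hce'0 : 0 ≤ c ^ e' := Real.rpow_nonneg hc.le _
    have h2 : (((2 : ℝ) ^ (n - i))⁻¹ : ℝ) * 2 = e' := by
      have hk : n - i = (n - (i + 1)) + 1 := by omega
      rw [he', hk, pow_succ, mul_inv, mul_assoc, inv_mul_cancel₀ two_ne_zero, mul_one]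
    have hkey : Real.sqrt (c ^ e') = c ^ (((2 : ℝ) ^ (n - i))⁻¹ : ℝ) := by
      rw [← h2, Real.rpow_mul hc.le, show ((2 : ℝ)) = ((2 : ℕ) : ℝ) by norm_num,
        Real.rpow_natCast, Real.sqrt_sq (Real.rpow_nonneg hc.le _)]
    have h3 : c ^ e' * (((i : ℝ) + 2) ^ 2) ≤ 1 + ramTail n (i + 1) := by
      push_cast at ih
      nlinarith [ih, hce']
    have h4 : Real.sqrt (c ^ e' * (((i : ℝ) + 2) ^ 2)) ≤
        Real.sqrt (1 + ramTail n (i + 1)) := Real.sqrt_le_sqrt h3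
    rw [Real.sqrt_mul hce'0, Real.sqrt_sq (by positivity), hkey] at h4
    calc c ^ (((2 : ℝ) ^ (n - i))⁻¹ : ℝ) * ((i : ℝ) * ((i : ℝ) + 2))
        = (i : ℝ) * (c ^ (((2 : ℝ) ^ (n - i))⁻¹ : ℝ) * ((i : ℝ) + 2)) := by ring
      _ ≤ (i : ℝ) * Real.sqrt (1 + ramTail n (i + 1)) :=
          mul_le_mul_of_nonneg_left h4 (by positivity)
termination_by n + 1 - i
decreasing_by omega

theorem ram_bound (n : ℕ) (hn : 1 ≤ n) :
    0 ≤ 3 - ramTail n 1 ∧ 3 - ramTail n 1 ≤ 18 * (n : ℝ) ^ 3 / 2 ^ n := by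
  have hub := ramTail_le n 1
  norm_num at hub
  have hn1 : (1 : ℝ) ≤ (n : ℝ) := by exact_mod_cast hn
  refine ⟨by linarith, ?_⟩
  have hlow := ramTail_lower n 1 hn
  norm_num at hlow
  set c : ℝ := ((n : ℝ) + 2)⁻¹ with hcdef
  set e : ℝ := (((2 : ℝ) ^ (n - 1))⁻¹ : ℝ) with hedef
  have hc : (0 : ℝ) < c := by positivity
  have he : (0 : ℝ) < e := by positivity
  set L : ℝ := Real.log ((n : ℝ) + 2) with hLdef
  have hL0 : 0 ≤ L := Real.log_nonneg (by linarith)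
  have hL : L ≤ (n : ℝ) + 1 := by
    have := Real.log_le_sub_one_of_pos (x := (n : ℝ) + 2) (by linarith)
    linarith
  have hce : 1 - L * e ≤ c ^ e := by
    rw [Real.rpow_def_of_pos hc, hcdef, Real.log_inv]
    have := Real.add_one_le_exp (-(L * e))
    calc 1 - L * e = -(L * e) + 1 := by ring
      _ ≤ Real.exp (-(L * e)) := this
      _ = Real.exp (-L * e) := by ring_nf
  have he2 : e = 2 / 2 ^ n := by
    have h2n : (2 : ℝ) ^ n = 2 ^ (n - 1) * 2 := by
      rw [← pow_succ]; congr 1; omega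
    rw [hedef, h2n]
    field_simp
  have hstep : 3 - ramTail n 1 ≤ 3 * (L * e) := by nlinarith [hlow, hce, he.le, hL0]
  have hfin : 3 * (L * e) ≤ 18 * (n : ℝ) ^ 3 / 2 ^ n := by
    rw [he2]
    have hp : (0 : ℝ) < 2 ^ n := by positivity
    have h6 : 6 * L ≤ 18 * (n : ℝ) ^ 3 := by
      have hcube : (n : ℝ) ≤ (n : ℝ) ^ 3 := by
        calc (n : ℝ) = (n : ℝ) ^ 1 := (pow_one _).symm
          _ ≤ (n : ℝ) ^ 3 := pow_le_pow_right₀ hn1 (by norm_num)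
      have hone : (1 : ℝ) ≤ (n : ℝ) ^ 3 := le_trans hn1 hcube
      linarith
    calc 3 * (L * (2 / 2 ^ n)) = (6 * L) / 2 ^ n := by ring
      _ ≤ 18 * (n : ℝ) ^ 3 / 2 ^ n := by gcongr
  linarith

theorem ramanujan_radical_eq_three :
    Filter.Tendsto (fun n => ramTail n 1) Filter.atTop (nhds 3) ∧
    ∃ C : ℝ, 0 < C ∧ ∀ n, 1 ≤ n →
      0 ≤ 3 - ramTail n 1 ∧ 3 - ramTail n 1 ≤ C * (n : ℝ) ^ 3 / 2 ^ n := by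
  constructor
  · have hg : Filter.Tendsto (fun n : ℕ => 3 - 18 * (n : ℝ) ^ 3 / 2 ^ n)
        Filter.atTop (nhds 3) := by
      have h0 : Filter.Tendsto (fun n : ℕ => 18 * (n : ℝ) ^ 3 / 2 ^ n)
          Filter.atTop (nhds 0) := by
        have := (tendsto_pow_const_div_const_pow_of_one_lt 3
          (show (1 : ℝ) < 2 by norm_num)).const_mul (18 : ℝ)
        simpa [mul_div_assoc] using this
      simpa using (tendsto_const_nhds (x := (3 : ℝ)) (f := Filter.atTop (α := ℕ))).sub h0
    apply tendsto_of_tendsto_of_tendsto_of_le_of_le' hg tendsto_const_nhds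
    · filter_upwards [Filter.eventually_ge_atTop 1] with n hn
      have := (ram_bound n hn).2
      linarith
    · filter_upwards [Filter.eventually_ge_atTop 1] with n hn
      have := (ram_bound n hn).1
      linarith
  · exact ⟨18, by norm_num, ram_bound⟩
end
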